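/- arXiv:1709.05124 — 6 statements merged into one kernel-verified Lean document; each statement's English description precedes it below -/
import Mathlib

section
/- If a, b ∈ C are linearly independent over R, f : D → C is holomorphic on the unit disc D, and both af and bf admit boundary measures (i.e., there exist real Borel measures μ, ν on T such that Re(af) and Re(bf) are the Poisson integrals of μ and ν respectively), then f belongs to the Hardy space H^1(D, C). -/
open Complex MeasureTheory Metric Filter

noncomputable section

instance : Fact ((0 : ℝ) < 2 * Real.pi) := ⟨by positivity⟩

/-- The unit circle `𝕋`, modelled as `ℝ / 2πℤ`, carrying its Lebesgue (arc-length)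
measure `volume` of total mass `2π`. -/
abbrev UnitCircle := AddCircle (2 * Real.pi)

/-- The canonical identification of `ℝ / 2πℤ` with the unit circle in `ℂ`, `θ ↦ e^{iθ}`. -/
def ePt : UnitCircle → ℂ :=
  Function.Periodic.lift (f := fun θ : ℝ => Complex.exp ((θ : ℂ) * Complex.I))
    (by intro x; simp [add_mul, Complex.exp_add, Complex.exp_two_pi_mul_I])

/-- Integration of a real function against a signed (real Borel) measure, via the Jordan
decomposition. -/
def sInt (μ : SignedMeasure UnitCircle) (f : UnitCircle → ℝ) : ℝ :=
  (∫ x, f x ∂μ.toJordanDecomposition.posPart) - ∫ x, f x ∂μ.toJordanDecomposition.negPart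

/-- The Poisson kernel `(1 - |λ|²)/|ζ - λ|²` for `λ ∈ 𝔻`, `ζ ∈ 𝕋`. -/
def poissonKer (l : ℂ) (ζ : UnitCircle) : ℝ :=
  (1 - ‖l‖ ^ 2) / ‖ePt ζ - l‖ ^ 2

/-- A holomorphic function `g` on the unit disc admits the boundary measure `μ` if `Re g` is
the Poisson integral of `μ`. -/
def HasBoundaryMeasure (g : ℂ → ℂ) (μ : SignedMeasure UnitCircle) : Prop :=
  ∀ l ∈ ball (0 : ℂ) 1, (g l).re = (1 / (2 * Real.pi)) * sInt μ (poissonKer l)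

/-- The point `e^{iθ}` on the unit circle (as a complex number). -/
def circlePt (θ : ℝ) : ℂ := Complex.exp ((θ : ℂ) * Complex.I)

/-- Membership in the classical Hardy space `H¹` of the unit disc: the integral means on
circles of radius `r < 1` are uniformly bounded. -/
def HardyH1Bound (f : ℂ → ℂ) : Prop :=
  ∃ C : ℝ, ∀ r ∈ Set.Ico (0 : ℝ) 1,
    (∫ θ in (0 : ℝ)..(2 * Real.pi), ‖f ((r : ℂ) * circlePt θ)‖) ≤ C

/-!
Since `a` and `b` span `ℂ` over `ℝ`, `‖z‖ ≤ K (|Re (a z)| + |Re (b z)|)`, so it suffices to bound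
the circle means of `|Re (a f)|` and `|Re (b f)|`. The Poisson integral of a signed measure `μ` is
dominated pointwise by that of its total variation `|μ|`, and by Fubini the circle mean of the
latter is `|μ|(𝕋) / 2π`: as a function of its pole, the Poisson kernel is the real part of the
Herglotz kernel `(ζ + λ) / (ζ - λ)`, whose mean over any circle of radius `< 1` is its value `1`
at the centre.
-/

lemma ofReal_mul_circlePt (r θ : ℝ) : (r : ℂ) * circlePt θ = circleMap 0 r θ :=
  (circleMap_zero r θ).symm

lemma ePt_coe (θ : ℝ) : ePt θ = circlePt θ := rfl

lemma norm_ePt (ζ : UnitCircle) : ‖ePt ζ‖ = 1 := by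
  induction ζ using QuotientAddGroup.induction_on with
  | H θ => simp [ePt_coe, circlePt, Complex.norm_exp]

lemma continuous_ePt : Continuous ePt :=
  continuous_coinduced_dom.mpr (continuous_exp.comp (by fun_prop))

lemma poissonKer_eq_poissonKernel (l : ℂ) (ζ : UnitCircle) :
    poissonKer l ζ = poissonKernel 0 l (ePt ζ) := by
  simp [poissonKer, poissonKernel, norm_ePt]

lemma poissonKer_nonneg {l : ℂ} (hl : ‖l‖ ≤ 1) (ζ : UnitCircle) : 0 ≤ poissonKer l ζ :=
  div_nonneg (by nlinarith [norm_nonneg l]) (by positivity)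

lemma differentiableOn_herglotzRieszKernel_pole {w : ℂ} {r : ℝ} (hr : |r| < ‖w‖) :
    DifferentiableOn ℂ (herglotzRieszKernel 0 · w) (closedBall 0 |r|) := by
  have hne : ∀ l ∈ closedBall (0 : ℂ) |r|, w - l ≠ 0 := fun l hl h => by
    rw [mem_closedBall_zero_iff, ← sub_eq_zero.mp h] at hl
    exact hl.not_gt hr
  simp only [herglotzRieszKernel_def, sub_zero]
  exact DifferentiableOn.div (by fun_prop) (by fun_prop) hne

lemma circleAverage_herglotzRieszKernel_pole {w : ℂ} {r : ℝ} (hr : |r| < ‖w‖) :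
    Real.circleAverage (herglotzRieszKernel 0 · w) 0 r = 1 := by
  have hw : w ≠ 0 := norm_pos_iff.mp ((abs_nonneg r).trans_lt hr)
  rw [((differentiableOn_herglotzRieszKernel_pole hr).diffContOnCl_ball subset_rfl).circleAverage]
  simp [herglotzRieszKernel_def, hw]

lemma circleAverage_poissonKernel_pole {w : ℂ} {r : ℝ} (hr : |r| < ‖w‖) :
    Real.circleAverage (poissonKernel 0 · w) 0 r = 1 := by
  have hint : CircleIntegrable (herglotzRieszKernel 0 · w) 0 r :=
    ((differentiableOn_herglotzRieszKernel_pole hr).continuousOn.mono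
      sphere_subset_closedBall).circleIntegrable'
  have := reCLM.circleAverage_comp_comm hint
  simp only [circleAverage_herglotzRieszKernel_pole hr] at this
  simpa [poissonKernel_eq_re_herglotzRieszKernel, Function.comp_def] using this

lemma intervalIntegral_poissonKer_circleMap (ζ : UnitCircle) {r : ℝ} (hr : |r| < 1) :
    ∫ θ in (0 : ℝ)..2 * Real.pi, poissonKer (circleMap 0 r θ) ζ = 2 * Real.pi := by
  have := circleAverage_poissonKernel_pole (w := ePt ζ) (hr.trans_eq (norm_ePt ζ).symm)
  rw [Real.circleAverage_def, smul_eq_mul, inv_mul_eq_one₀ (by positivity)] at this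
  simpa only [poissonKer_eq_poissonKernel] using this.symm

lemma ePt_sub_ne_zero {l : ℂ} (hl : ‖l‖ < 1) (ζ : UnitCircle) : ePt ζ - l ≠ 0 := fun h => by
  rw [← sub_eq_zero.mp h, norm_ePt] at hl
  exact hl.false

lemma continuousOn_uncurry_poissonKer :
    ContinuousOn (Function.uncurry poissonKer) (ball 0 1 ×ˢ Set.univ) := by
  refine ContinuousOn.div (by fun_prop) ?_ fun p hp => ?_
  · exact ((continuous_ePt.comp continuous_snd).sub continuous_fst).norm.pow 2 |>.continuousOn
  · exact pow_ne_zero 2 (norm_ne_zero_iff.mpr (ePt_sub_ne_zero (mem_ball_zero_iff.mp hp.1) p.2))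

lemma continuous_poissonKer {l : ℂ} (hl : ‖l‖ < 1) : Continuous (poissonKer l) :=
  continuousOn_uncurry_poissonKer.comp_continuous (continuous_const.prodMk continuous_id)
    fun _ => ⟨mem_ball_zero_iff.mpr hl, trivial⟩

lemma continuous_poissonKer_circleMap {r : ℝ} (hr : |r| < 1) :
    Continuous fun p : ℝ × UnitCircle => poissonKer (circleMap 0 r p.1) p.2 :=
  continuousOn_uncurry_poissonKer.comp_continuous
    ((continuous_circleMap 0 r).prodMap continuous_id) fun _ => ⟨by simpa using hr, trivial⟩

lemma Continuous.integrable_restrict_uIoc_prod {X E : Type*} [TopologicalSpace X] [T2Space X]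
    [CompactSpace X] [MeasurableSpace X] [BorelSpace X] [SecondCountableTopology X]
    [NormedAddCommGroup E] {τ : Measure X} [IsFiniteMeasure τ] {F : ℝ × X → E}
    (hF : Continuous F) (a b : ℝ) :
    Integrable F ((volume.restrict (Set.uIoc a b)).prod τ) := by
  rw [← Measure.restrict_univ (μ := τ), Measure.prod_restrict, ← IntegrableOn]
  exact (hF.continuousOn.integrableOn_compact (isCompact_uIcc.prod isCompact_univ)).mono_set
    (Set.prod_mono Set.uIoc_subset_uIcc subset_rfl)

lemma intervalIntegral_integral_poissonKer_circleMap (ρ : Measure UnitCircle) [IsFiniteMeasure ρ]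
    {r : ℝ} (hr : |r| < 1) :
    ∫ θ in (0 : ℝ)..2 * Real.pi, ∫ ζ, poissonKer (circleMap 0 r θ) ζ ∂ρ
      = 2 * Real.pi * ρ.real Set.univ := by
  rw [intervalIntegral_integral_swap
    ((continuous_poissonKer_circleMap hr).integrable_restrict_uIoc_prod _ _)]
  simp only [intervalIntegral_poissonKer_circleMap _ hr, integral_const, smul_eq_mul]
  ring

lemma abs_sInt_le_integral_totalVariation (μ : SignedMeasure UnitCircle) {φ : UnitCircle → ℝ}
    (hφ : 0 ≤ φ) (hint : Integrable φ μ.totalVariation) :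
    |sInt μ φ| ≤ ∫ ζ, φ ζ ∂μ.totalVariation := by
  rw [SignedMeasure.totalVariation,
    integral_add_measure hint.left_of_add_measure hint.right_of_add_measure, sInt]
  refine (abs_sub _ _).trans_eq ?_
  rw [abs_of_nonneg (integral_nonneg hφ), abs_of_nonneg (integral_nonneg hφ)]

theorem HasBoundaryMeasure.intervalIntegral_abs_re_le {g : ℂ → ℂ} {μ : SignedMeasure UnitCircle}
    (hg : HasBoundaryMeasure g μ) (hc : ContinuousOn g (ball 0 1)) {r : ℝ} (hr : |r| < 1) :
    ∫ θ in (0 : ℝ)..2 * Real.pi, |(g (circleMap 0 r θ)).re| ≤ μ.totalVariation.real Set.univ := by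
  set τ := μ.totalVariation
  have hmem (θ : ℝ) : circleMap 0 r θ ∈ ball 0 1 := by simpa using hr
  have hgr : Continuous fun θ => g (circleMap 0 r θ) :=
    hc.comp_continuous (continuous_circleMap 0 r) hmem
  have hpointwise (θ : ℝ) : |(g (circleMap 0 r θ)).re|
      ≤ (2 * Real.pi)⁻¹ * ∫ ζ, poissonKer (circleMap 0 r θ) ζ ∂τ := by
    have hl : ‖circleMap 0 r θ‖ < 1 := mem_ball_zero_iff.mp (hmem θ)
    rw [hg _ (hmem θ), abs_mul, abs_of_pos (by positivity), one_div]
    gcongr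
    exact abs_sInt_le_integral_totalVariation μ (fun ζ => poissonKer_nonneg hl.le ζ)
      ((continuous_poissonKer hl).integrable_of_hasCompactSupport (.of_compactSpace _))
  have hint : IntervalIntegrable (fun θ => ∫ ζ, poissonKer (circleMap 0 r θ) ζ ∂τ)
      volume 0 (2 * Real.pi) :=
    intervalIntegrable_iff.mpr
      ((continuous_poissonKer_circleMap hr).integrable_restrict_uIoc_prod _ _).integral_prod_left
  calc ∫ θ in (0 : ℝ)..2 * Real.pi, |(g (circleMap 0 r θ)).re|
      ≤ ∫ θ in (0 : ℝ)..2 * Real.pi, (2 * Real.pi)⁻¹ * ∫ ζ, poissonKer (circleMap 0 r θ) ζ ∂τ :=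
        intervalIntegral.integral_mono_on (by positivity)
          ((continuous_re.comp hgr).abs.intervalIntegrable _ _)
          (hint.const_mul _) fun θ _ => hpointwise θ
    _ = τ.real Set.univ := by
        rw [intervalIntegral.integral_const_mul,
          intervalIntegral_integral_poissonKer_circleMap τ hr]
        field_simp

lemma exists_norm_le_abs_re_mul_add {a b : ℂ} (hab : LinearIndependent ℝ ![a, b]) :
    ∃ K, 0 ≤ K ∧ ∀ z : ℂ, ‖z‖ ≤ K * (|(a * z).re| + |(b * z).re|) := by
  have hspan : Submodule.span ℝ {a, b} = ⊤ := by
    have := hab.span_eq_top_of_card_eq_finrank' (by simp [Complex.finrank_real_complex])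
    rwa [Matrix.range_cons_cons_empty] at this
  obtain ⟨α, β, h1⟩ := Submodule.mem_span_pair.mp (hspan ▸ Submodule.mem_top : (1 : ℂ) ∈ _)
  obtain ⟨γ, δ, hI⟩ := Submodule.mem_span_pair.mp (hspan ▸ Submodule.mem_top : I ∈ _)
  refine ⟨|α| + |β| + |γ| + |δ|, by positivity, fun z => ?_⟩
  have hre := congr_arg (fun w => (w * z).re) h1
  have him := congr_arg (fun w => (w * z).re) hI
  simp only [add_mul, smul_mul_assoc, add_re, smul_re, smul_eq_mul, one_mul, I_mul_re] at hre him
  calc ‖z‖ ≤ |z.re| + |z.im| := norm_le_abs_re_add_abs_im z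
    _ = |α * (a * z).re + β * (b * z).re| + |γ * (a * z).re + δ * (b * z).re| := by
        rw [← hre, ← abs_neg z.im, ← him]
    _ ≤ (|α| * |(a * z).re| + |β| * |(b * z).re|) + (|γ| * |(a * z).re| + |δ| * |(b * z).re|) := by
        gcongr <;> exact (abs_add_le _ _).trans_eq (by rw [abs_mul, abs_mul])
    _ ≤ _ := by
        have := abs_nonneg (a * z).re
        have := abs_nonneg (b * z).re
        nlinarith [abs_nonneg α, abs_nonneg β, abs_nonneg γ, abs_nonneg δ]

/-- If `a, b ∈ ℂ` are linearly independent over `ℝ`, `f` is holomorphic on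
the unit disc, and both `af` and `bf` admit boundary measures, then `f ∈ H¹(𝔻, ℂ)`. -/
theorem H1_of_two_boundary_measures (a b : ℂ)
    (hab : LinearIndependent ℝ ![a, b])
    (f : ℂ → ℂ) (hf : DifferentiableOn ℂ f (ball (0 : ℂ) 1))
    (μ ν : SignedMeasure UnitCircle)
    (hμ : HasBoundaryMeasure (fun l => a * f l) μ)
    (hν : HasBoundaryMeasure (fun l => b * f l) ν) :
    HardyH1Bound f := by
  obtain ⟨K, hK, hnorm⟩ := exists_norm_le_abs_re_mul_add hab
  refine ⟨K * (μ.totalVariation.real Set.univ + ν.totalVariation.real Set.univ), fun r hr => ?_⟩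
  have hr_abs : |r| < 1 := abs_lt.mpr ⟨by linarith [hr.1], hr.2⟩
  have hfr : Continuous fun θ => f (circleMap 0 r θ) :=
    hf.continuousOn.comp_continuous (continuous_circleMap 0 r) fun θ => by simpa using hr_abs
  have hint (c : ℂ) :
      IntervalIntegrable (fun θ => |(c * f (circleMap 0 r θ)).re|) volume 0 (2 * Real.pi) :=
    (continuous_re.comp (continuous_const.mul hfr)).abs.intervalIntegrable _ _
  simp only [ofReal_mul_circlePt]
  calc ∫ θ in (0 : ℝ)..2 * Real.pi, ‖f (circleMap 0 r θ)‖
      ≤ ∫ θ in (0 : ℝ)..2 * Real.pi,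
          K * (|(a * f (circleMap 0 r θ)).re| + |(b * f (circleMap 0 r θ)).re|) :=
        intervalIntegral.integral_mono_on (by positivity) (hfr.norm.intervalIntegrable _ _)
          (((hint a).add (hint b)).const_mul K) fun θ _ => hnorm _
    _ = K * ((∫ θ in (0 : ℝ)..2 * Real.pi, |(a * f (circleMap 0 r θ)).re|)
          + ∫ θ in (0 : ℝ)..2 * Real.pi, |(b * f (circleMap 0 r θ)).re|) := by
        rw [intervalIntegral.integral_const_mul, intervalIntegral.integral_add (hint a) (hint b)]
    _ ≤ _ := by
        gcongr
        · exact hμ.intervalIntegral_abs_re_le (continuousOn_const.mul hf.continuousOn) hr_abs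
        · exact hν.intervalIntegral_abs_re_le (continuousOn_const.mul hf.continuousOn) hr_abs
end
end

section
/- Let D ⊂ C^n be a convex domain and let φ be a complex geodesic for D with left inverse f. Define h(λ) := (∂f/∂z_1(φ(λ)), …, ∂f/∂z_n(φ(λ))). Then, with ψ_z defined as ψ_z(λ) := (h(λ)•(z−φ(λ)) − h(0)•(z−φ(0)))/λ + λ·conj(h(0)•(z−φ(0))), one has Re ψ_{φ(0)}(0) ≠ 0 and Re ψ_z(λ) ≤ 0 for all λ in the unit disc and all z ∈ D. -/
/-!
Fix `z ∈ D` and `l ≠ 0`. For `t ∈ [0, 1]` the map `μ ↦ f (φ μ + t (z - φ μ))` sends the disc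
into itself by convexity of `D`, so by Schwarz–Pick `m t := M_{a t} (u t)` satisfies
`|m t| ≤ |l| = |m 0|`, where `u t`, `a t` are its values at `l` and `0` and `M_a` is the disc
automorphism sending `a` to `0`. Hence `Re (conj (m 0) * m' 0) ≤ 0`, and a direct computation gives
`m' 0 = l ψ_z(l)`. The case `l = 0` follows by continuity, and `ψ_{φ 0}(0) = -(f ∘ φ)'(0) = -1`.

Both continuity and the last computation need `h` to be holomorphic. This holds because
`w ↦ ∂f/∂y (φ w)` is the locally uniform limit of the holomorphic difference quotients
`w ↦ (f (φ w + s y) - f (φ w)) / s`, by the Cauchy estimates.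
-/

open Complex Metric

noncomputable section

/-- The bilinear dot product on `ℂⁿ`. -/
def dotn {n : ℕ} (z w : Fin n → ℂ) : ℂ := ∑ j, z j * w j

/-- The function `ψ_z(λ) = (h(λ)•(z-φ(λ)) - h(0)•(z-φ(0)))/λ + λ conj(h(0)•(z-φ(0)))`,
with the removable singularity at `λ = 0` handled by `dslope`. -/
def psi {n : ℕ} (φ h : ℂ → Fin n → ℂ) (z : Fin n → ℂ) (l : ℂ) : ℂ :=
  dslope (fun w => dotn (h w) (z - φ w)) 0 l
    + l * (starRingEnd ℂ) (dotn (h 0) (z - φ 0))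

open Set Filter Topology ComplexConjugate

theorem hasDerivAt_comp_add_smul {𝕜 E F : Type*} [NontriviallyNormedField 𝕜] [NormedAlgebra 𝕜 ℂ]
    [NormedAddCommGroup E] [NormedSpace ℂ E] [NormedSpace 𝕜 E] [IsScalarTower 𝕜 ℂ E]
    [NormedAddCommGroup F] [NormedSpace ℂ F] [NormedSpace 𝕜 F] [IsScalarTower 𝕜 ℂ F]
    {f : E → F} {L : E →L[ℂ] F} {x v : E} (hf : HasFDerivAt f L x) :
    HasDerivAt (fun t : 𝕜 => f (x + t • v)) (L v) 0 := by
  have hline : HasDerivAt (fun t : 𝕜 => x + t • v) v 0 := by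
    simpa using ((hasDerivAt_id (0 : 𝕜)).smul_const v).const_add x
  have hf' : HasFDerivAt f (L.restrictScalars 𝕜) (x + (0 : 𝕜) • v) := by
    simpa using hf.restrictScalars 𝕜
  exact hf'.comp_hasDerivAt 0 hline

section HolomorphicDerivative

variable {E F : Type*} [NormedAddCommGroup E] [NormedSpace ℂ E]
  [NormedAddCommGroup F] [NormedSpace ℂ F] [CompleteSpace F]

theorem norm_dslope_sub_deriv_le {G : ℂ → F} {r R : ℝ} {s : ℂ}
    (hd : DifferentiableOn ℂ G (ball 0 r)) (hmaps : MapsTo G (ball 0 r) (closedBall (G 0) R))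
    (hs : s ∈ ball 0 r) :
    ‖dslope G 0 s - deriv G 0‖ ≤ 2 * R / r / r * ‖s‖ := by
  have hr : 0 < r := pos_of_mem_ball hs
  have hbound : ∀ x ∈ ball (0 : ℂ) r, ‖dslope G 0 x‖ ≤ R / r := fun x hx =>
    norm_dslope_le_div_of_mapsTo_ball hd hmaps hx
  have hmaps' : MapsTo (dslope G 0) (ball 0 r) (closedBall (dslope G 0 0) (2 * R / r)) := by
    intro x hx
    rw [mem_closedBall, dist_eq_norm]
    calc ‖dslope G 0 x - dslope G 0 0‖ ≤ ‖dslope G 0 x‖ + ‖dslope G 0 0‖ := norm_sub_le _ _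
      _ ≤ R / r + R / r := add_le_add (hbound x hx) (hbound 0 (mem_ball_self hr))
      _ = 2 * R / r := by ring
  have := dist_le_div_mul_dist_of_mapsTo_ball
    ((differentiableOn_dslope (ball_mem_nhds 0 hr)).mpr hd) hmaps' hs
  rwa [dist_eq_norm, dist_zero_right, dslope_same] at this

theorem tendstoUniformlyOn_dslope_deriv {ι : Type*} {G : ι → ℂ → F} {S : Set ι} {r R : ℝ}
    (hr : 0 < r) (hd : ∀ i ∈ S, DifferentiableOn ℂ (G i) (ball 0 r))
    (hmaps : ∀ i ∈ S, MapsTo (G i) (ball 0 r) (closedBall (G i 0) R)) :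
    TendstoUniformlyOn (fun s i => dslope (G i) 0 s) (fun i => deriv (G i) 0) (𝓝 0) S := by
  rw [Metric.tendstoUniformlyOn_iff]
  intro ε hε
  set C := 2 * R / r / r
  have hρ : 0 < min r (ε / (|C| + 1)) := lt_min hr (by positivity)
  filter_upwards [ball_mem_nhds (0 : ℂ) hρ] with s hs i hi
  have hsr : s ∈ ball (0 : ℂ) r := ball_subset_ball (min_le_left _ _) hs
  have hsε : ‖s‖ < ε / (|C| + 1) := by
    simpa using lt_of_lt_of_le (mem_ball_zero_iff.mp hs) (min_le_right _ _)
  rw [dist_eq_norm, norm_sub_rev]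
  calc ‖dslope (G i) 0 s - deriv (G i) 0‖ ≤ C * ‖s‖ :=
        norm_dslope_sub_deriv_le (hd i hi) (hmaps i hi) hsr
    _ ≤ (|C| + 1) * ‖s‖ := by gcongr; linarith [le_abs_self C]
    _ < ε := by rwa [lt_div_iff₀' (by positivity)] at hsε

theorem differentiableOn_fderiv_apply_comp_of_mapsTo_closedBall {f : E → F} {D : Set E}
    (hD : IsOpen D) (hf : DifferentiableOn ℂ f D) {c : F} {R : ℝ}
    (hfD : MapsTo f D (closedBall c R)) {φ : ℂ → E} {V : Set ℂ} (hV : IsOpen V)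
    (hφ : DifferentiableOn ℂ φ V) {y : E} {r : ℝ} (hr : 0 < r)
    (hmem : ∀ w ∈ V, ∀ s ∈ ball (0 : ℂ) r, φ w + s • y ∈ D) :
    DifferentiableOn ℂ (fun w => fderiv ℂ f (φ w) y) V := by
  set G : ℂ → ℂ → F := fun w s => f (φ w + s • y)
  have hφD : ∀ w ∈ V, φ w ∈ D := fun w hw => by simpa using hmem w hw 0 (mem_ball_self hr)
  have hGd : ∀ w ∈ V, DifferentiableOn ℂ (G w) (ball 0 r) := fun w hw =>
    hf.comp ((differentiableOn_const _).add (differentiableOn_id.smul_const y)) (hmem w hw)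
  have hGmaps : ∀ w ∈ V, MapsTo (G w) (ball 0 r) (closedBall (G w 0) (2 * R)) := by
    intro w hw s hs
    have h₁ := mem_closedBall'.mp (hfD (hmem w hw 0 (mem_ball_self hr)))
    have h₂ := mem_closedBall.mp (hfD (hmem w hw s hs))
    rw [mem_closedBall]
    linarith [dist_triangle (G w s) c (G w 0)]
  have hderiv : ∀ w ∈ V, deriv (G w) 0 = fderiv ℂ f (φ w) y := fun w hw =>
    (hasDerivAt_comp_add_smul (hf.differentiableAt (hD.mem_nhds (hφD w hw))).hasFDerivAt).deriv
  have hlim : TendstoUniformlyOn (fun s w => dslope (G w) 0 s) (fun w => deriv (G w) 0)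
      (𝓝[≠] 0) V := fun u hu =>
    nhdsWithin_le_nhds (tendstoUniformlyOn_dslope_deriv hr hGd hGmaps u hu)
  have hquot : ∀ᶠ s in 𝓝[≠] (0 : ℂ), DifferentiableOn ℂ (fun w => dslope (G w) 0 s) V := by
    filter_upwards [self_mem_nhdsWithin, nhdsWithin_le_nhds (ball_mem_nhds (0 : ℂ) hr)]
      with s hs0 hs
    have hdiff : DifferentiableOn ℂ (fun w => s⁻¹ • (G w s - G w 0)) V :=
      ((hf.comp (hφ.add_const _) fun w hw => hmem w hw s hs).sub
        (hf.comp (hφ.add_const _) fun w hw => hmem w hw 0 (mem_ball_self hr))).const_smul _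
    refine hdiff.congr fun w _ => ?_
    rw [dslope_of_ne _ hs0, slope_def_module, sub_zero]
  exact (hlim.tendstoLocallyUniformlyOn.differentiableOn hquot hV).congr fun w hw =>
    (hderiv w hw).symm

theorem DifferentiableOn.differentiableOn_fderiv_apply_comp {f : E → F} {D : Set E}
    (hf : DifferentiableOn ℂ f D) (hD : IsOpen D) {φ : ℂ → E} {U : Set ℂ}
    (hφ : DifferentiableOn ℂ φ U) (hU : IsOpen U) (hφD : MapsTo φ U D) (y : E) :
    DifferentiableOn ℂ (fun w => fderiv ℂ f (φ w) y) U := by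
  intro w₀ hw₀
  have hx₀ : D ∈ 𝓝 (φ w₀) := hD.mem_nhds (hφD hw₀)
  obtain ⟨ε, hε, hεD⟩ := Metric.mem_nhds_iff.mp (inter_mem hx₀
    ((hf.continuousOn.continuousAt hx₀).preimage_mem_nhds (ball_mem_nhds _ one_pos)))
  obtain ⟨δ, hδ, hδU⟩ := Metric.mem_nhds_iff.mp (inter_mem (hU.mem_nhds hw₀)
    ((hφ.continuousOn.continuousAt (hU.mem_nhds hw₀)).preimage_mem_nhds
      (ball_mem_nhds _ (half_pos hε))))
  have hsmul : Tendsto (fun s : ℂ => s • y) (𝓝 0) (𝓝 0) :=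
    (continuous_id.smul continuous_const).tendsto' 0 0 (zero_smul ℂ y)
  obtain ⟨r, hr, hry⟩ := Metric.mem_nhds_iff.mp (hsmul (ball_mem_nhds _ (half_pos hε)))
  have hmem : ∀ w ∈ ball w₀ δ, ∀ s ∈ ball (0 : ℂ) r, φ w + s • y ∈ ball (φ w₀) ε := by
    intro w hw s hs
    have h₁ : ‖φ w - φ w₀‖ < ε / 2 := mem_ball_iff_norm.mp (hδU hw).2
    have h₂ : ‖s • y‖ < ε / 2 := mem_ball_zero_iff.mp (hry hs)
    rw [mem_ball_iff_norm]
    calc ‖φ w + s • y - φ w₀‖ ≤ ‖φ w - φ w₀‖ + ‖s • y‖ := by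
          rw [add_sub_right_comm]; exact norm_add_le _ _
      _ < ε / 2 + ε / 2 := add_lt_add h₁ h₂
      _ = ε := add_halves ε
  have hlocal := differentiableOn_fderiv_apply_comp_of_mapsTo_closedBall isOpen_ball
    (hf.mono fun x hx => (hεD hx).1) (fun x hx => ball_subset_closedBall (hεD hx).2)
    isOpen_ball (hφ.mono fun w hw => (hδU hw).1) hr hmem
  exact (hlocal.differentiableAt (ball_mem_nhds w₀ hδ)).differentiableWithinAt

end HolomorphicDerivative

section Mobius

def mobius (a w : ℂ) : ℂ := (w - a) / (1 - conj a * w)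

theorem mobius_zero_left (w : ℂ) : mobius 0 w = w := by simp [mobius]

theorem mobius_self (a : ℂ) : mobius a a = 0 := by simp [mobius]

theorem normSq_one_sub_conj_mul_sub_normSq_sub (a w : ℂ) :
    normSq (1 - conj a * w) - normSq (w - a) = (1 - normSq a) * (1 - normSq w) := by
  simp only [normSq_apply, sub_re, sub_im, mul_re, mul_im, conj_re, conj_im, one_re, one_im]
  ring

variable {a w : ℂ}

theorem one_sub_conj_mul_ne_zero (ha : ‖a‖ < 1) (hw : ‖w‖ < 1) : 1 - conj a * w ≠ 0 := by
  refine sub_ne_zero.mpr fun h => ?_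
  have := congrArg norm h
  rw [norm_mul, norm_conj, norm_one] at this
  nlinarith [norm_nonneg a, norm_nonneg w]

theorem norm_mobius_lt_one (ha : ‖a‖ < 1) (hw : ‖w‖ < 1) : ‖mobius a w‖ < 1 := by
  have hden := one_sub_conj_mul_ne_zero ha hw
  rw [mobius, norm_div, div_lt_one (norm_pos_iff.mpr hden), ← sq_lt_sq₀ (norm_nonneg _)
    (norm_nonneg _), ← normSq_eq_norm_sq, ← normSq_eq_norm_sq, ← sub_pos,
    normSq_one_sub_conj_mul_sub_normSq_sub, normSq_eq_norm_sq, normSq_eq_norm_sq]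
  apply mul_pos <;> nlinarith [norm_nonneg a, norm_nonneg w]

theorem differentiableOn_mobius (ha : ‖a‖ < 1) : DifferentiableOn ℂ (mobius a) (ball 0 1) :=
  (differentiableOn_id.sub_const a).div
    ((differentiableOn_const 1).sub (differentiableOn_id.const_mul _))
    fun _ hw => one_sub_conj_mul_ne_zero ha (mem_ball_zero_iff.mp hw)

/-- The **Schwarz–Pick lemma** at the origin. -/
theorem norm_mobius_le_of_mapsTo_ball {F : ℂ → ℂ} (hd : DifferentiableOn ℂ F (ball 0 1))
    (hmaps : MapsTo F (ball 0 1) (ball 0 1)) {l : ℂ} (hl : ‖l‖ < 1) :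
    ‖mobius (F 0) (F l)‖ ≤ ‖l‖ := by
  have hF0 : ‖F 0‖ < 1 := mem_ball_zero_iff.mp (hmaps (mem_ball_self one_pos))
  refine norm_le_norm_of_mapsTo_ball ((differentiableOn_mobius hF0).comp hd hmaps)
    (fun w hw => ball_subset_closedBall ?_) (mobius_self _) hl
  exact mem_ball_zero_iff.mpr (norm_mobius_lt_one hF0 (mem_ball_zero_iff.mp (hmaps hw)))

theorem HasDerivAt.mobius {α u : ℝ → ℂ} {α' u' : ℂ} {t : ℝ} (hα : HasDerivAt α α' t)
    (hu : HasDerivAt u u' t) (hα0 : α t = 0) :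
    HasDerivAt (fun s => mobius (α s) (u s)) (u' - α' + u t ^ 2 * conj α') t := by
  have hden := (hasDerivAt_const t (1 : ℂ)).fun_sub (hα.star.fun_mul hu)
  refine ((hu.fun_sub hα).fun_div hden (by simp [hα0])).congr_deriv ?_
  simp only [hα0, star_zero, zero_mul, sub_zero, one_pow, div_one, mul_one]
  rw [star_def]
  ring

end Mobius

open RealInnerProductSpace in
theorem inner_deriv_nonpos_of_norm_le {F : Type*} [NormedAddCommGroup F] [InnerProductSpace ℝ F]
    {m : ℝ → F} {m' : F} {a b : ℝ} (hab : a < b) (hm : HasDerivAt m m' a)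
    (hle : ∀ t ∈ Icc a b, ‖m t‖ ≤ ‖m a‖) : ⟪m a, m'⟫ ≤ 0 := by
  have hmax : IsLocalMaxOn (‖m ·‖ ^ 2) (Icc a b) a :=
    eventually_nhdsWithin_of_forall fun t ht => pow_le_pow_left₀ (norm_nonneg _) (hle t ht) 2
  have hcone : b - a ∈ posTangentConeAt (Icc a b) a :=
    sub_mem_posTangentConeAt_of_segment_subset (segment_eq_Icc hab.le).subset
  have := hmax.hasFDerivWithinAt_nonpos hm.norm_sq.hasFDerivAt.hasFDerivWithinAt hcone
  rw [ContinuousLinearMap.toSpanSingleton_apply, smul_eq_mul] at this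
  nlinarith

section DotProduct

variable {n : ℕ}

theorem ContinuousLinearMap.apply_eq_dotn (L : (Fin n → ℂ) →L[ℂ] ℂ) (v : Fin n → ℂ) :
    L v = dotn (fun j => L (Pi.single j 1)) v := by
  conv_lhs => rw [← Finset.univ_sum_single v]
  simp only [map_sum, dotn]
  refine Finset.sum_congr rfl fun j _ => ?_
  rw [mul_comm, ← smul_eq_mul, ← map_smul, ← Pi.single_smul, smul_eq_mul, mul_one]

theorem HasDerivAt.dotn {p q : ℂ → Fin n → ℂ} {p' q' : Fin n → ℂ} {x : ℂ}
    (hp : HasDerivAt p p' x) (hq : HasDerivAt q q' x) :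
    HasDerivAt (fun w => dotn (p w) (q w)) (dotn p' (q x) + dotn (p x) q') x := by
  simp only [_root_.dotn, ← Finset.sum_add_distrib]
  exact HasDerivAt.fun_sum fun j _ => (hasDerivAt_pi.mp hp j).mul (hasDerivAt_pi.mp hq j)

end DotProduct

section ComplexGeodesic

variable {n : ℕ} {D : Set (Fin n → ℂ)} {φ h : ℂ → Fin n → ℂ} {f : (Fin n → ℂ) → ℂ}

theorem mul_psi_of_ne_zero (z : Fin n → ℂ) {l : ℂ} (hl : l ≠ 0) :
    l * psi φ h z l = dotn (h l) (z - φ l) - dotn (h 0) (z - φ 0)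
      + l ^ 2 * conj (dotn (h 0) (z - φ 0)) := by
  rw [psi, dslope_of_ne _ hl, slope_def_field, sub_zero]
  field_simp

theorem fderiv_apply_eq_dotn
    (hdef : ∀ l ∈ ball (0 : ℂ) 1, ∀ j, h l j = fderiv ℂ f (φ l) (Pi.single j 1))
    {l : ℂ} (hl : l ∈ ball (0 : ℂ) 1) (v : Fin n → ℂ) :
    fderiv ℂ f (φ l) v = dotn (h l) v := by
  rw [(fderiv ℂ f (φ l)).apply_eq_dotn]
  congr 1
  exact funext fun j => (hdef l hl j).symm

theorem differentiableOn_gradient (hDopen : IsOpen D)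
    (hφ : DifferentiableOn ℂ φ (ball (0 : ℂ) 1)) (hφD : MapsTo φ (ball (0 : ℂ) 1) D)
    (hf : DifferentiableOn ℂ f D)
    (hdef : ∀ l ∈ ball (0 : ℂ) 1, ∀ j, h l j = fderiv ℂ f (φ l) (Pi.single j 1)) :
    DifferentiableOn ℂ h (ball 0 1) :=
  differentiableOn_pi.mpr fun j =>
    (hf.differentiableOn_fderiv_apply_comp hDopen hφ isOpen_ball hφD _).congr fun w hw =>
      hdef w hw j

theorem dotn_gradient_deriv_eq_one (hDopen : IsOpen D)
    (hφ : DifferentiableOn ℂ φ (ball (0 : ℂ) 1)) (hφD : MapsTo φ (ball (0 : ℂ) 1) D)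
    (hf : DifferentiableOn ℂ f D) (hleft : ∀ l ∈ ball (0 : ℂ) 1, f (φ l) = l)
    (hdef : ∀ l ∈ ball (0 : ℂ) 1, ∀ j, h l j = fderiv ℂ f (φ l) (Pi.single j 1))
    {l : ℂ} (hl : l ∈ ball (0 : ℂ) 1) :
    dotn (h l) (deriv φ l) = 1 := by
  have hcomp : HasDerivAt (f ∘ φ) (fderiv ℂ f (φ l) (deriv φ l)) l :=
    (hf.differentiableAt (hDopen.mem_nhds (hφD hl))).hasFDerivAt.comp_hasDerivAt l
      (hφ.differentiableAt (isOpen_ball.mem_nhds hl)).hasDerivAt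
  have hid : HasDerivAt (f ∘ φ) 1 l :=
    (hasDerivAt_id l).congr_of_eventuallyEq
      (eventually_of_mem (isOpen_ball.mem_nhds hl) hleft)
  rw [← fderiv_apply_eq_dotn hdef hl, hcomp.unique hid]

theorem hasDerivAt_dotn_gradient_sub (hDopen : IsOpen D)
    (hφ : DifferentiableOn ℂ φ (ball (0 : ℂ) 1)) (hφD : MapsTo φ (ball (0 : ℂ) 1) D)
    (hf : DifferentiableOn ℂ f D)
    (hdef : ∀ l ∈ ball (0 : ℂ) 1, ∀ j, h l j = fderiv ℂ f (φ l) (Pi.single j 1))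
    (z : Fin n → ℂ) :
    HasDerivAt (fun w => dotn (h w) (z - φ w))
      (dotn (deriv h 0) (z - φ 0) + dotn (h 0) (0 - deriv φ 0)) 0 := by
  have h0 : ball (0 : ℂ) 1 ∈ 𝓝 0 := ball_mem_nhds 0 one_pos
  have hh := ((differentiableOn_gradient hDopen hφ hφD hf hdef).differentiableAt h0).hasDerivAt
  exact hh.dotn ((hasDerivAt_const 0 z).fun_sub (hφ.differentiableAt h0).hasDerivAt)

theorem psi_self_zero (hDopen : IsOpen D)
    (hφ : DifferentiableOn ℂ φ (ball (0 : ℂ) 1)) (hφD : MapsTo φ (ball (0 : ℂ) 1) D)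
    (hf : DifferentiableOn ℂ f D) (hleft : ∀ l ∈ ball (0 : ℂ) 1, f (φ l) = l)
    (hdef : ∀ l ∈ ball (0 : ℂ) 1, ∀ j, h l j = fderiv ℂ f (φ l) (Pi.single j 1)) :
    psi φ h (φ 0) 0 = -1 := by
  rw [psi, dslope_same, (hasDerivAt_dotn_gradient_sub hDopen hφ hφD hf hdef (φ 0)).deriv,
    zero_mul, add_zero, sub_self, zero_sub,
    ← dotn_gradient_deriv_eq_one hDopen hφ hφD hf hleft hdef (mem_ball_self one_pos)]
  simp [dotn]

theorem continuousAt_psi_zero (hDopen : IsOpen D)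
    (hφ : DifferentiableOn ℂ φ (ball (0 : ℂ) 1)) (hφD : MapsTo φ (ball (0 : ℂ) 1) D)
    (hf : DifferentiableOn ℂ f D)
    (hdef : ∀ l ∈ ball (0 : ℂ) 1, ∀ j, h l j = fderiv ℂ f (φ l) (Pi.single j 1))
    (z : Fin n → ℂ) :
    ContinuousAt (psi φ h z) 0 :=
  (continuousAt_dslope_same.mpr
    (hasDerivAt_dotn_gradient_sub hDopen hφ hφD hf hdef z).differentiableAt).add
    (continuousAt_id.mul continuousAt_const)

theorem hasDerivAt_comp_segment (hDopen : IsOpen D) (hφD : MapsTo φ (ball (0 : ℂ) 1) D)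
    (hf : DifferentiableOn ℂ f D)
    (hdef : ∀ l ∈ ball (0 : ℂ) 1, ∀ j, h l j = fderiv ℂ f (φ l) (Pi.single j 1))
    {μ : ℂ} (hμ : μ ∈ ball (0 : ℂ) 1) (z : Fin n → ℂ) :
    HasDerivAt (fun t : ℝ => f (φ μ + t • (z - φ μ))) (dotn (h μ) (z - φ μ)) 0 := by
  rw [← fderiv_apply_eq_dotn hdef hμ]
  exact hasDerivAt_comp_add_smul (hf.differentiableAt (hDopen.mem_nhds (hφD hμ))).hasFDerivAt

theorem norm_mobius_comp_segment_le (hDconv : Convex ℝ D)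
    (hφ : DifferentiableOn ℂ φ (ball (0 : ℂ) 1)) (hφD : MapsTo φ (ball (0 : ℂ) 1) D)
    (hf : DifferentiableOn ℂ f D) (hfD : MapsTo f D (ball (0 : ℂ) 1))
    {z : Fin n → ℂ} (hz : z ∈ D) {t : ℝ} (ht : t ∈ Icc (0 : ℝ) 1)
    {l : ℂ} (hl : l ∈ ball (0 : ℂ) 1) :
    ‖mobius (f (φ 0 + t • (z - φ 0))) (f (φ l + t • (z - φ l)))‖ ≤ ‖l‖ := by
  have hseg : MapsTo (fun μ => φ μ + t • (z - φ μ)) (ball 0 1) D := fun μ hμ =>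
    hDconv.add_smul_sub_mem (hφD hμ) hz ht
  exact norm_mobius_le_of_mapsTo_ball
    (hf.comp (hφ.add (((differentiableOn_const z).sub hφ).const_smul t)) hseg)
    (hfD.comp hseg) (mem_ball_zero_iff.mp hl)

theorem re_psi_nonpos_of_ne_zero (hDopen : IsOpen D) (hDconv : Convex ℝ D)
    (hφ : DifferentiableOn ℂ φ (ball (0 : ℂ) 1)) (hφD : MapsTo φ (ball (0 : ℂ) 1) D)
    (hf : DifferentiableOn ℂ f D) (hfD : MapsTo f D (ball (0 : ℂ) 1))
    (hleft : ∀ l ∈ ball (0 : ℂ) 1, f (φ l) = l)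
    (hdef : ∀ l ∈ ball (0 : ℂ) 1, ∀ j, h l j = fderiv ℂ f (φ l) (Pi.single j 1))
    {l : ℂ} (hl : l ∈ ball (0 : ℂ) 1) (hl0 : l ≠ 0) {z : Fin n → ℂ} (hz : z ∈ D) :
    (psi φ h z l).re ≤ 0 := by
  have h0 : (0 : ℂ) ∈ ball (0 : ℂ) 1 := mem_ball_self one_pos
  set m : ℝ → ℂ := fun t => mobius (f (φ 0 + t • (z - φ 0))) (f (φ l + t • (z - φ l)))
  have hm0 : m 0 = l := by simp [m, hleft 0 h0, hleft l hl, mobius_zero_left]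
  have hm : HasDerivAt m (l * psi φ h z l) 0 := by
    have := (hasDerivAt_comp_segment hDopen hφD hf hdef h0 z).mobius
      (hasDerivAt_comp_segment hDopen hφD hf hdef hl z) (by simp [hleft 0 h0])
    rw [mul_psi_of_ne_zero z hl0]
    simpa [hleft l hl] using this
  have hinner := inner_deriv_nonpos_of_norm_le one_pos hm fun t ht => by
    rw [hm0]; exact norm_mobius_comp_segment_le hDconv hφ hφD hf hfD hz ht hl
  rw [hm0, Complex.inner, mul_comm l, mul_assoc, mul_conj, re_mul_ofReal] at hinner
  exact nonpos_of_mul_nonpos_left hinner (normSq_pos.mpr hl0)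

theorem re_psi_nonpos (hDopen : IsOpen D) (hDconv : Convex ℝ D)
    (hφ : DifferentiableOn ℂ φ (ball (0 : ℂ) 1)) (hφD : MapsTo φ (ball (0 : ℂ) 1) D)
    (hf : DifferentiableOn ℂ f D) (hfD : MapsTo f D (ball (0 : ℂ) 1))
    (hleft : ∀ l ∈ ball (0 : ℂ) 1, f (φ l) = l)
    (hdef : ∀ l ∈ ball (0 : ℂ) 1, ∀ j, h l j = fderiv ℂ f (φ l) (Pi.single j 1))
    {l : ℂ} (hl : l ∈ ball (0 : ℂ) 1) {z : Fin n → ℂ} (hz : z ∈ D) :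
    (psi φ h z l).re ≤ 0 := by
  rcases eq_or_ne l 0 with rfl | hl0
  · have hcont := continuous_re.continuousAt.comp (continuousAt_psi_zero hDopen hφ hφD hf hdef z)
    refine le_of_tendsto (hcont.tendsto.mono_left (nhdsWithin_le_nhds (s := {0}ᶜ))) ?_
    filter_upwards [self_mem_nhdsWithin, nhdsWithin_le_nhds (isOpen_ball.mem_nhds hl)]
      with w hw0 hw
    exact re_psi_nonpos_of_ne_zero hDopen hDconv hφ hφD hf hfD hleft hdef hw hw0 hz
  · exact re_psi_nonpos_of_ne_zero hDopen hDconv hφ hφD hf hfD hleft hdef hl hl0 hz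

end ComplexGeodesic

theorem complex_geodesic_necessary_general {n : ℕ} (D : Set (Fin n → ℂ))
    (hDopen : IsOpen D) (hDconv : Convex ℝ D)
    (φ : ℂ → Fin n → ℂ) (hφ : DifferentiableOn ℂ φ (ball (0 : ℂ) 1))
    (hφD : Set.MapsTo φ (ball (0 : ℂ) 1) D)
    (f : (Fin n → ℂ) → ℂ) (hf : DifferentiableOn ℂ f D)
    (hfD : Set.MapsTo f D (ball (0 : ℂ) 1))
    (hleft : ∀ l ∈ ball (0 : ℂ) 1, f (φ l) = l)
    (h : ℂ → Fin n → ℂ)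
    (hdef : ∀ l ∈ ball (0 : ℂ) 1, ∀ j, h l j = fderiv ℂ f (φ l) (Pi.single j 1)) :
    (psi φ h (φ 0) 0).re ≠ 0 ∧
      ∀ l ∈ ball (0 : ℂ) 1, ∀ z ∈ D, (psi φ h z l).re ≤ 0 := by
  refine ⟨?_, fun l hl z hz => re_psi_nonpos hDopen hDconv hφ hφD hf hfD hleft hdef hl hz⟩
  rw [psi_self_zero hDopen hφ hφD hf hleft hdef]
  norm_num

/-- Necessary condition: if `φ` is a complex geodesic for a convex domain `D`
with left inverse `f`, and `h(λ)` is the gradient `(∂f/∂z_j(φ(λ)))_j`, then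
`Re ψ_{φ(0)}(0) ≠ 0` and `Re ψ_z(λ) ≤ 0` for all `λ ∈ 𝔻`, `z ∈ D`. -/
theorem complex_geodesic_necessary {n : ℕ} (D : Set (Fin n → ℂ))
    (hDopen : IsOpen D) (hDne : D.Nonempty) (hDconv : Convex ℝ D)
    (φ : ℂ → Fin n → ℂ) (hφ : DifferentiableOn ℂ φ (ball (0 : ℂ) 1))
    (hφD : Set.MapsTo φ (ball (0 : ℂ) 1) D)
    (f : (Fin n → ℂ) → ℂ) (hf : DifferentiableOn ℂ f D)
    (hfD : Set.MapsTo f D (ball (0 : ℂ) 1))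
    (hleft : ∀ l ∈ ball (0 : ℂ) 1, f (φ l) = l)
    (h : ℂ → Fin n → ℂ)
    (hdef : ∀ l ∈ ball (0 : ℂ) 1, ∀ j, h l j = fderiv ℂ f (φ l) (Pi.single j 1)) :
    (psi φ h (φ 0) 0).re ≠ 0 ∧
      ∀ l ∈ ball (0 : ℂ) 1, ∀ z ∈ D, (psi φ h z l).re ≤ 0 :=
  complex_geodesic_necessary_general D hDopen hDconv φ hφ hφD f hf hfD hleft h hdef
end
end

section
/- Let f : D_unit → D_unit be a holomorphic self-map of the unit disc. Then for all λ in the unit disc, |f(λ)| − |λ| ≤ (2|f(0)|/(1 + |f(0)|)) · (1 − |λ|). -/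
/-!
Composing `f` with the disc automorphism that sends `f 0` to `0` and applying Schwarz's lemma gives
the Schwarz–Pick bound `ρ(f λ, f 0) ≤ |λ|` for the pseudo-hyperbolic distance
`ρ(w, b) = |w - b| / |1 - b̄ w|`. Since `ρ(|w|, |b|) ≤ ρ(w, b)`, this yields
`|f λ| ≤ (a + t) / (1 + a t)` with `a = |f 0|`, `t = |λ|`, hence
`|f λ| - t ≤ a (1 - t) (1 + t) / (1 + a t) ≤ 2a / (1 + a) · (1 - t)`,
the last step being `(1 - a) (1 - t) ≥ 0`.
-/

open Complex Metric ComplexConjugate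

namespace Complex

theorem sq_norm_one_sub_conj_mul_sub_sq_norm_sub (b w : ℂ) :
    ‖1 - conj b * w‖ ^ 2 - ‖w - b‖ ^ 2 = (1 - ‖b‖ ^ 2) * (1 - ‖w‖ ^ 2) := by
  simp only [Complex.sq_norm, normSq_apply, sub_re, sub_im, mul_re, mul_im, conj_re, conj_im,
    one_re, one_im]
  ring

theorem norm_sub_lt_norm_one_sub_conj_mul {b w : ℂ} (hb : ‖b‖ < 1) (hw : ‖w‖ < 1) :
    ‖w - b‖ < ‖1 - conj b * w‖ := by
  have hpos : 0 < (1 - ‖b‖ ^ 2) * (1 - ‖w‖ ^ 2) := by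
    apply mul_pos <;> nlinarith [norm_nonneg b, norm_nonneg w]
  rw [← sq_norm_one_sub_conj_mul_sub_sq_norm_sub] at hpos
  exact (pow_lt_pow_iff_left₀ (norm_nonneg _) (norm_nonneg _) two_ne_zero).mp (by linarith)

theorem one_sub_conj_mul_ne_zero {b w : ℂ} (hb : ‖b‖ < 1) (hw : ‖w‖ < 1) :
    1 - conj b * w ≠ 0 :=
  norm_pos_iff.mp ((norm_nonneg _).trans_lt (norm_sub_lt_norm_one_sub_conj_mul hb hw))

/-- The Schwarz–Pick lemma at the origin: Schwarz's lemma applied to `f` followed by the disc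
automorphism `w ↦ (w - f 0) / (1 - conj (f 0) * w)`. -/
theorem norm_sub_le_mul_norm_one_sub_conj_mul_of_mapsTo_ball {f : ℂ → ℂ}
    (hf : DifferentiableOn ℂ f (ball 0 1)) (hmap : Set.MapsTo f (ball 0 1) (ball 0 1))
    {z : ℂ} (hz : z ∈ ball 0 1) :
    ‖f z - f 0‖ ≤ ‖z‖ * ‖1 - conj (f 0) * f z‖ := by
  have hnorm : ∀ {w}, w ∈ ball (0 : ℂ) 1 → ‖f w‖ < 1 := fun hw => mem_ball_zero_iff.mp (hmap hw)
  have hb := hnorm (mem_ball_self one_pos)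
  set g : ℂ → ℂ := fun w => (f w - f 0) / (1 - conj (f 0) * f w)
  have hg : DifferentiableOn ℂ g (ball 0 1) :=
    (hf.sub_const _).div ((differentiableOn_const _).sub (hf.const_mul _))
      fun w hw => one_sub_conj_mul_ne_zero hb (hnorm hw)
  have hgmap : Set.MapsTo g (ball 0 1) (closedBall 0 1) := fun w hw => by
    rw [mem_closedBall_zero_iff, norm_div]
    exact div_le_one_of_le₀ (norm_sub_lt_norm_one_sub_conj_mul hb (hnorm hw)).le (norm_nonneg _)
  have hgz : ‖g z‖ ≤ ‖z‖ :=
    norm_le_norm_of_mapsTo_ball hg hgmap (by simp [g]) (mem_ball_zero_iff.mp hz)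
  calc ‖f z - f 0‖ = ‖g z‖ * ‖1 - conj (f 0) * f z‖ := by
        rw [norm_div, div_mul_cancel₀ _ (norm_ne_zero_iff.mpr
          (one_sub_conj_mul_ne_zero hb (hnorm hz)))]
    _ ≤ ‖z‖ * ‖1 - conj (f 0) * f z‖ := by gcongr

/-- Taking norms does not increase the pseudo-hyperbolic distance `‖w - b‖ / ‖1 - conj b * w‖`. -/
theorem norm_sub_norm_mul_norm_one_sub_conj_mul_le {b w : ℂ} (hb : ‖b‖ < 1) (hw : ‖w‖ < 1) :
    (‖w‖ - ‖b‖) * ‖1 - conj b * w‖ ≤ ‖w - b‖ * (1 - ‖b‖ * ‖w‖) := by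
  have hab : 0 ≤ 1 - ‖b‖ * ‖w‖ := by nlinarith [norm_nonneg b, norm_nonneg w]
  rcases le_or_gt ‖w‖ ‖b‖ with hle | hlt
  · nlinarith [norm_nonneg (1 - conj b * w), norm_nonneg (w - b)]
  have hden : 1 - ‖b‖ * ‖w‖ ≤ ‖1 - conj b * w‖ := by
    simpa [norm_mul] using norm_sub_norm_le (1 : ℂ) (conj b * w)
  have hP : 0 ≤ (1 - ‖b‖ ^ 2) * (1 - ‖w‖ ^ 2) := by
    apply mul_nonneg <;> nlinarith [norm_nonneg b, norm_nonneg w]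
  have hid := sq_norm_one_sub_conj_mul_sub_sq_norm_sub b w
  refine (pow_le_pow_iff_left₀ (by positivity) (by positivity) two_ne_zero).mp ?_
  -- `(‖w‖ - ‖b‖)² = (1 - ‖b‖‖w‖)² - P` and `‖w - b‖² = ‖1 - conj b * w‖² - P` with the same
  -- `P` (the product in `hP`), so after squaring the claim reduces to `hden`.
  nlinarith [mul_le_mul_of_nonneg_left (pow_le_pow_left₀ hab hden 2) hP]

theorem norm_sub_norm_le_mul_of_norm_sub_le_mul {b w : ℂ} {t : ℝ} (hb : ‖b‖ < 1) (hw : ‖w‖ < 1)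
    (h : ‖w - b‖ ≤ t * ‖1 - conj b * w‖) : ‖w‖ - ‖b‖ ≤ t * (1 - ‖b‖ * ‖w‖) := by
  have hden : 0 < ‖1 - conj b * w‖ := norm_pos_iff.mpr (one_sub_conj_mul_ne_zero hb hw)
  refine le_of_mul_le_mul_right ?_ hden
  calc (‖w‖ - ‖b‖) * ‖1 - conj b * w‖
      ≤ ‖w - b‖ * (1 - ‖b‖ * ‖w‖) := norm_sub_norm_mul_norm_one_sub_conj_mul_le hb hw
    _ ≤ t * ‖1 - conj b * w‖ * (1 - ‖b‖ * ‖w‖) := by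
      gcongr
      nlinarith [norm_nonneg b, norm_nonneg w]
    _ = t * (1 - ‖b‖ * ‖w‖) * ‖1 - conj b * w‖ := by ring

end Complex

theorem sub_le_two_mul_div_one_add_mul_one_sub {a t x : ℝ} (ha₀ : 0 ≤ a) (ha₁ : a ≤ 1)
    (ht₀ : 0 ≤ t) (ht₁ : t ≤ 1) (h : x - a ≤ t * (1 - a * x)) :
    x - t ≤ 2 * a / (1 + a) * (1 - t) := by
  rw [div_mul_eq_mul_div, le_div_iff₀ (by linarith)]
  nlinarith [mul_nonneg ha₀ ht₀,
    mul_nonneg (mul_nonneg ha₀ (sub_nonneg.mpr ha₁)) (sub_nonneg.mpr ht₁)]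

/-- For a holomorphic self-map `f` of the unit disc,
`|f(λ)| - |λ| ≤ (2|f(0)|/(1+|f(0)|)) (1-|λ|)` for all `λ` in the unit disc. -/
theorem schwarz_pick_growth (f : ℂ → ℂ)
    (hf : DifferentiableOn ℂ f (ball (0 : ℂ) 1))
    (hmap : Set.MapsTo f (ball (0 : ℂ) 1) (ball (0 : ℂ) 1)) :
    ∀ l ∈ ball (0 : ℂ) 1,
      ‖f l‖ - ‖l‖ ≤
        (2 * ‖f 0‖ / (1 + ‖f 0‖)) * (1 - ‖l‖) := by
  intro l hl
  have hb : ‖f 0‖ < 1 := mem_ball_zero_iff.mp (hmap (mem_ball_self one_pos))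
  have hgrowth : ‖f l‖ - ‖f 0‖ ≤ ‖l‖ * (1 - ‖f 0‖ * ‖f l‖) :=
    norm_sub_norm_le_mul_of_norm_sub_le_mul hb (mem_ball_zero_iff.mp (hmap hl))
      (norm_sub_le_mul_norm_one_sub_conj_mul_of_mapsTo_ball hf hmap hl)
  exact sub_le_two_mul_div_one_add_mul_one_sub (norm_nonneg _) hb.le (norm_nonneg _)
    (mem_ball_zero_iff.mp hl).le hgrowth
end

section
/- Let D ∈ A_d^n, i.e., a convex domain in C^n containing no complex affine lines whose maximal real affine subspaces contained in D are translates of {0}^{n−d} × (iR)^d. Define W_D := {v ∈ C^n : sup_{z∈D} Re(z•v) < ∞} and S_D := {y ∈ R^d : (0,y)•v ≤ 0 for all v ∈ W_D}. Then for every z ∈ D, y ∈ S_D and x ∈ R^d, the point z + (0,y) + (0,ix) belongs to D. -/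
open Complex Metric

noncomputable section

variable {m d : ℕ}

/-- `ℂ^{m+d}` modelled as `ℂ^m × ℂ^d`: the first `m` coordinates and the last `d` coordinates. -/
abbrev En (m d : ℕ) := (Fin m → ℂ) × (Fin d → ℂ)

/-- The bilinear dot product on `ℂ^{m+d} = ℂ^m × ℂ^d`. -/
def dotE (z w : En m d) : ℂ := ∑ j, z.1 j * w.1 j + ∑ j, z.2 j * w.2 j

/-- The real subspace of directions `{0}^m × (iℝ)^d`. -/
def Sdir (m d : ℕ) : Set (En m d) := {v | v.1 = 0 ∧ ∀ j, (v.2 j).re = 0}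

/-- `D` belongs to the family `𝒜_d^n` (with `n = m + d`): `D` is a convex domain in
`ℂ^m × ℂ^d` containing no complex affine lines, invariant under translations by
`{0}^m × (iℝ)^d`, and every real affine line contained in `D` has direction in
`{0}^m × (iℝ)^d` (so the maximal real affine subspaces contained in `D` are exactly
the translates of `{0}^m × (iℝ)^d`). -/
def InA (D : Set (En m d)) : Prop :=
  IsOpen D ∧ D.Nonempty ∧ Convex ℝ D ∧
  (∀ z v : En m d, v ≠ 0 → ∃ t : ℂ, z + t • v ∉ D) ∧
  (∀ z ∈ D, ∀ x : Fin d → ℝ, (z.1, fun j => z.2 j + (x j : ℂ) * Complex.I) ∈ D) ∧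
  (∀ z v : En m d, (∀ t : ℝ, z + t • v ∈ D) → v ∈ Sdir m d)

/-- The cone `W_D = {v : sup_{z ∈ D} Re (z • v) < ∞}`. -/
def WD (D : Set (En m d)) : Set (En m d) :=
  {v | ∃ C : ℝ, ∀ z ∈ D, (dotE z v).re ≤ C}

/-- The cone `S_D = {y ∈ ℝ^d : (0,y) • v ≤ 0 for all v ∈ W_D}`. -/
def SD (D : Set (En m d)) : Set (Fin d → ℝ) :=
  {y | ∀ v ∈ WD D, (dotE ((0 : Fin m → ℂ), fun j => (y j : ℂ)) v).re ≤ 0}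

/-! If `z + t • (0,y)` left `closure D` for some `t ≥ 0`, Hahn–Banach would separate it from
`closure D` by a real functional. Since `(v, w) ↦ Re (w • v)` is a nondegenerate real bilinear
form, that functional is `Re (· • v)` for some `v`, which then lies in `W_D` while
`Re ((0,y) • v) > 0`, contradicting `y ∈ S_D`. So the ray from `z` in direction `(0,y)` stays in
`closure D`; as `D` is open and convex, `z + (0,y)`, the midpoint of `z ∈ D` and
`z + 2 • (0,y) ∈ closure D`, lies in `D`, and translating by `(0, ix)` keeps it there. -/

lemma dotE_comm (v w : En m d) : dotE v w = dotE w v := by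
  simp only [dotE, mul_comm]

lemma dotE_add (u v w : En m d) : dotE u (v + w) = dotE u v + dotE u w := by
  simp only [dotE, Prod.fst_add, Prod.snd_add, Pi.add_apply, mul_add, Finset.sum_add_distrib]
  ring

lemma dotE_smul (c : ℂ) (v w : En m d) : dotE v (c • w) = c * dotE v w := by
  simp only [dotE, Prod.smul_fst, Prod.smul_snd, Pi.smul_apply, smul_eq_mul, mul_add,
    Finset.mul_sum, mul_left_comm c]

lemma re_dotE_smul (c : ℝ) (v w : En m d) : (dotE v (c • w)).re = c * (dotE v w).re := by
  rw [← Complex.coe_smul, dotE_smul, Complex.re_ofReal_mul]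

def reDotForm : En m d →ₗ[ℝ] En m d →ₗ[ℝ] ℝ :=
  LinearMap.mk₂ ℝ (fun v w => (dotE w v).re)
    (fun v₁ v₂ w => by rw [dotE_add, Complex.add_re])
    (fun c v w => re_dotE_smul c w v)
    (fun v w₁ w₂ => by rw [dotE_comm, dotE_add, Complex.add_re, dotE_comm, dotE_comm v])
    (fun c v w => by rw [dotE_comm, re_dotE_smul, dotE_comm, smul_eq_mul])

lemma reDotForm_apply (v w : En m d) : reDotForm v w = (dotE w v).re := rfl

lemma re_dotE_star_self (v : En m d) :
    (dotE (star v) v).re = ∑ j, normSq (v.1 j) + ∑ j, normSq (v.2 j) := by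
  simp [dotE, Complex.re_sum, ← Complex.normSq_eq_conj_mul_self]

lemma reDotForm_injective : Function.Injective (reDotForm : En m d →ₗ[ℝ] _) := by
  rw [← LinearMap.ker_eq_bot, LinearMap.ker_eq_bot']
  intro v hv
  have h : (dotE (star v) v).re = 0 := by rw [← reDotForm_apply, hv]; rfl
  rw [re_dotE_star_self, add_eq_zero_iff_of_nonneg
    (Finset.sum_nonneg fun _ _ => normSq_nonneg _) (Finset.sum_nonneg fun _ _ => normSq_nonneg _),
    Fintype.sum_eq_zero_iff_of_nonneg (fun _ => normSq_nonneg _),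
    Fintype.sum_eq_zero_iff_of_nonneg (fun _ => normSq_nonneg _)] at h
  exact Prod.ext (funext fun j => normSq_eq_zero.1 (congrFun h.1 j))
    (funext fun j => normSq_eq_zero.1 (congrFun h.2 j))

lemma exists_re_dotE_eq (f : En m d →ₗ[ℝ] ℝ) : ∃ v : En m d, ∀ w, f w = (dotE w v).re := by
  obtain ⟨v, rfl⟩ := (LinearMap.injective_iff_surjective_of_finrank_eq_finrank
    Subspace.dual_finrank_eq.symm).1 (reDotForm_injective (m := m) (d := d)) f
  exact ⟨v, fun _ => rfl⟩

lemma add_smul_mem_closure_of_mem_SD {D : Set (En m d)} (hC : Convex ℝ D) {z : En m d}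
    (hz : z ∈ D) {y : Fin d → ℝ} (hy : y ∈ SD D) {t : ℝ} (ht : 0 ≤ t) :
    z + t • ((0 : Fin m → ℂ), fun j => (y j : ℂ)) ∈ closure D := by
  by_contra hnot
  obtain ⟨f, c, hfD, hcf⟩ := geometric_hahn_banach_closed_point hC.closure isClosed_closure hnot
  obtain ⟨v, hv⟩ := exists_re_dotE_eq f.toLinearMap
  have hvW : v ∈ WD D := ⟨c, fun w hw => hv w ▸ (hfD w (subset_closure hw)).le⟩
  have hfy : f (0, fun j => (y j : ℂ)) ≤ 0 := (hv _).trans_le (hy v hvW)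
  have hfz : f z < c := hfD z (subset_closure hz)
  rw [map_add, map_smul, smul_eq_mul] at hcf
  nlinarith

lemma add_mem_of_mem_SD {D : Set (En m d)} (hO : IsOpen D) (hC : Convex ℝ D) {z : En m d}
    (hz : z ∈ D) {y : Fin d → ℝ} (hy : y ∈ SD D) :
    z + ((0 : Fin m → ℂ), fun j => (y j : ℂ)) ∈ D := by
  have hmid := hC.combo_interior_closure_mem_interior (hO.interior_eq.symm ▸ hz)
    (add_smul_mem_closure_of_mem_SD hC hz hy zero_le_two) one_half_pos one_half_pos.le
    (add_halves 1)
  rw [hO.interior_eq] at hmid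
  convert hmid using 1
  module

/-- If `D ∈ 𝒜_d^n`, then `z + (0,y) + (0,ix) ∈ D` for every `z ∈ D`,
`y ∈ S_D` and `x ∈ ℝ^d`. -/
theorem mem_of_add_SD {m d : ℕ} (D : Set (En m d)) (hD : InA D) :
    ∀ z ∈ D, ∀ y ∈ SD D, ∀ x : Fin d → ℝ,
      (z.1, fun j => z.2 j + (y j : ℂ) + (x j : ℂ) * Complex.I) ∈ D := by
  obtain ⟨hO, -, hC, -, hiR, -⟩ := hD
  intro z hz y hy x
  simpa using hiR _ (add_mem_of_mem_SD hO hC hz hy) x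
end
end

section
/- Let D ∈ A_d^n and W_D := {v ∈ C^n : sup_{z∈D} Re(z•v) < ∞}. Then W_D ⊂ C^{n−d} × R^d and the interior of W_D relative to C^{n−d} × R^d is non-empty. -/
/-!
Translations along `{0}^m × (iℝ)^d` preserve `D`, and `Re (z • v)` stays bounded along such a
line only if `v` is real in the last `d` coordinates. Conversely, by Hahn–Banach every real
functional vanishing on `W_D` is `Re (· • w)` for a two-sided recession direction `w` of `D`,
so `w ∈ {0}^m × (iℝ)^d` and the functional kills `ℂ^m × ℝ^d`; hence `ℂ^m × ℝ^d` lies in the span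
of `W_D`. As `W_D` is convex and contains `0`, its intrinsic interior is nonempty and open in
that span.
-/

open Complex Metric

noncomputable section

variable {m d : ℕ}

/-- `Re (z • w)`, the real pairing that identifies `En m d` with its real dual. -/
def reDot : LinearMap.BilinForm ℝ (En m d) :=
  LinearMap.mk₂ ℝ (fun z w => (dotE z w).re)
    (fun z₁ z₂ w => by simp [dotE, add_mul, Finset.sum_add_distrib]; ring)
    (fun c z w => by
      simp only [dotE, Prod.smul_fst, Prod.smul_snd, Pi.smul_apply, Complex.real_smul,
        mul_assoc, ← Finset.mul_sum, ← mul_add, Complex.re_ofReal_mul, smul_eq_mul])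
    (fun z w₁ w₂ => by simp [dotE, mul_add, Finset.sum_add_distrib]; ring)
    (fun c z w => by
      simp only [dotE, Prod.smul_fst, Prod.smul_snd, Pi.smul_apply, Complex.real_smul,
        mul_left_comm _ (c : ℂ), ← Finset.mul_sum, ← mul_add, Complex.re_ofReal_mul, smul_eq_mul])

lemma reDot_apply (z w : En m d) : reDot z w = (dotE z w).re := rfl

lemma reDot_comm (z w : En m d) : reDot z w = reDot w z := by
  simp [reDot_apply, dotE, mul_comm]

lemma reDot_nondegenerate : (reDot : LinearMap.BilinForm ℝ (En m d)).Nondegenerate := by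
  refine .ofSeparatingLeft fun z hz => ?_
  have h := hz (star z)
  simp only [reDot_apply, dotE, Prod.fst_star, Prod.snd_star, Pi.star_apply, Complex.star_def,
    Complex.mul_conj, Complex.add_re, Complex.re_sum, Complex.ofReal_re] at h
  rw [add_eq_zero_iff_of_nonneg (Finset.sum_nonneg fun _ _ => normSq_nonneg _)
      (Finset.sum_nonneg fun _ _ => normSq_nonneg _),
    Finset.sum_eq_zero_iff_of_nonneg fun _ _ => normSq_nonneg _,
    Finset.sum_eq_zero_iff_of_nonneg fun _ _ => normSq_nonneg _] at h
  exact Prod.ext (funext fun j => normSq_eq_zero.1 (h.1 j (Finset.mem_univ j)))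
    (funext fun j => normSq_eq_zero.1 (h.2 j (Finset.mem_univ j)))

lemma exists_reDot_eq (f : Module.Dual ℝ (En m d)) : ∃ w, ∀ z, reDot z w = f z :=
  ⟨(reDot.toDual reDot_nondegenerate).symm f, fun z => by
    rw [reDot_comm, LinearMap.BilinForm.apply_toDual_symm_apply]⟩

lemma mem_WD_iff {D : Set (En m d)} {v : En m d} :
    v ∈ WD D ↔ ∃ C : ℝ, ∀ z ∈ D, reDot z v ≤ C := Iff.rfl

lemma zero_mem_WD (D : Set (En m d)) : (0 : En m d) ∈ WD D :=
  mem_WD_iff.2 ⟨0, fun z _ => by simp⟩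

lemma convex_WD (D : Set (En m d)) : Convex ℝ (WD D) := by
  rintro v ⟨C₁, hv⟩ u ⟨C₂, hu⟩ a b ha hb -
  refine mem_WD_iff.2 ⟨a * C₁ + b * C₂, fun z hz => ?_⟩
  calc reDot z (a • v + b • u) = a * reDot z v + b * reDot z u := by simp
    _ ≤ a * C₁ + b * C₂ := by gcongr; exacts [hv z hz, hu z hz]

lemma reDot_eq_zero_of_line_subset {D : Set (En m d)} {v z c : En m d} (hv : v ∈ WD D)
    (hline : ∀ t : ℝ, z + t • c ∈ D) : reDot c v = 0 := by
  obtain ⟨C, hC⟩ := mem_WD_iff.1 hv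
  have hbdd : ∀ t : ℝ, reDot z v + t * reDot c v ≤ C := fun t => by
    simpa using hC _ (hline t)
  by_contra hc
  have := hbdd ((C - reDot z v + 1) / reDot c v)
  rw [div_mul_cancel₀ _ hc] at this
  linarith

lemma add_smul_single_I_mem {D : Set (En m d)} (hD : InA D) {z : En m d} (hz : z ∈ D)
    (j : Fin d) (t : ℝ) : z + t • ((0, Pi.single j I) : En m d) ∈ D := by
  convert hD.2.2.2.2.1 z hz (Pi.single j t) using 1
  refine Prod.ext (by simp) (funext fun k => ?_)
  by_cases hk : k = j
  · subst hk; simp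
  · simp [hk]

lemma im_eq_zero_of_mem_WD {D : Set (En m d)} (hD : InA D) {v : En m d} (hv : v ∈ WD D)
    (j : Fin d) : (v.2 j).im = 0 := by
  obtain ⟨z, hz⟩ := hD.2.1
  simpa [reDot_apply, dotE, Pi.single_apply] using
    reDot_eq_zero_of_line_subset hv (add_smul_single_I_mem hD hz j)

/-- Hahn–Banach: a point outside `D` is separated from `D` by a functional, and the functional is
`reDot · w` for some `w ∈ W_D`. -/
lemma add_smul_mem_of_forall_reDot_nonpos {D : Set (En m d)} (hopen : IsOpen D)
    (hconv : Convex ℝ D) {c : En m d} (hc : ∀ v ∈ WD D, reDot c v ≤ 0) {z : En m d}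
    (hz : z ∈ D) {t : ℝ} (ht : 0 ≤ t) : z + t • c ∈ D := by
  by_contra hmem
  obtain ⟨f, hf⟩ := geometric_hahn_banach_open_point hconv hopen hmem
  obtain ⟨w, hw⟩ := exists_reDot_eq (f : En m d →ₗ[ℝ] ℝ)
  have hwW : w ∈ WD D :=
    mem_WD_iff.2 ⟨f (z + t • c), fun a ha => by rw [hw]; exact (hf a ha).le⟩
  have hfc : f c ≤ 0 := by rw [← ContinuousLinearMap.coe_coe, ← hw]; exact hc w hwW
  have := hf z hz
  simp only [map_add, map_smul, smul_eq_mul] at this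
  nlinarith

lemma mem_Sdir_of_forall_reDot_eq_zero {D : Set (En m d)} (hD : InA D) {c : En m d}
    (hc : ∀ v ∈ WD D, reDot c v = 0) : c ∈ Sdir m d := by
  obtain ⟨hopen, ⟨z, hz⟩, hconv, -, -, hline⟩ := hD
  refine hline z c fun t => ?_
  rcases le_total 0 t with ht | ht
  · exact add_smul_mem_of_forall_reDot_nonpos hopen hconv (fun v hv => (hc v hv).le) hz ht
  · simpa using add_smul_mem_of_forall_reDot_nonpos (c := -c) hopen hconv
      (fun v hv => by simp [hc v hv]) hz (neg_nonneg.2 ht)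

lemma reDot_eq_zero_of_mem_Sdir {x c : En m d} (hx : ∀ j, (x.2 j).im = 0) (hc : c ∈ Sdir m d) :
    reDot x c = 0 := by
  simp [reDot_apply, dotE, Complex.re_sum, Complex.mul_re, hc.1, hc.2, hx]

lemma mem_span_WD {D : Set (En m d)} (hD : InA D) {x : En m d} (hx : ∀ j, (x.2 j).im = 0) :
    x ∈ Submodule.span ℝ (WD D) := by
  rw [← Subspace.forall_mem_dualAnnihilator_apply_eq_zero_iff]
  intro f hf
  obtain ⟨w, hw⟩ := exists_reDot_eq f
  have hwW : ∀ v ∈ WD D, reDot w v = 0 := fun v hv => by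
    rw [reDot_comm, hw]
    exact (Submodule.mem_dualAnnihilator f).1 hf v (Submodule.subset_span hv)
  rw [← hw]
  exact reDot_eq_zero_of_mem_Sdir hx (mem_Sdir_of_forall_reDot_eq_zero hD hwW)

lemma mem_affineSpan_of_mem_span {k V : Type*} [Ring k] [AddCommGroup V] [Module k V]
    {s : Set V} (h0 : 0 ∈ s) {x : V} (hx : x ∈ Submodule.span k s) : x ∈ affineSpan k s := by
  have hx' : x ∈ vectorSpan k s := by simpa [vectorSpan_eq_span_vsub_set_right k h0] using hx
  simpa using vadd_mem_affineSpan_of_mem_affineSpan_of_mem_vectorSpan (mem_affineSpan k h0) hx'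

lemma exists_forall_dist_lt_mem_of_mem_intrinsicInterior {k V : Type*} [Ring k]
    [SeminormedAddCommGroup V] [Module k V] {s : Set V} {y : V}
    (hy : y ∈ intrinsicInterior k s) :
    ∃ ε > (0 : ℝ), ∀ w ∈ affineSpan k s, dist w y < ε → w ∈ s := by
  obtain ⟨y, hy, rfl⟩ := hy
  obtain ⟨ε, hε, hball⟩ := Metric.mem_nhds_iff.1 (mem_interior_iff_mem_nhds.1 hy)
  exact ⟨ε, hε, fun w hw hdist => hball (show (⟨w, hw⟩ : affineSpan k s) ∈ ball y ε from hdist)⟩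

/-- If `D ∈ 𝒜_d^n`, then `W_D ⊂ ℂ^{n-d} × ℝ^d` and the interior of `W_D`
relative to `ℂ^{n-d} × ℝ^d` is non-empty. -/
theorem WD_subset_and_rel_interior {m d : ℕ} (D : Set (En m d)) (hD : InA D) :
    (∀ v ∈ WD D, ∀ j, (v.2 j).im = 0) ∧
    ∃ v ∈ WD D, ∃ ε > (0 : ℝ), ∀ w : En m d,
      (∀ j, (w.2 j).im = 0) → dist w v < ε → w ∈ WD D := by
  refine ⟨fun v hv => im_eq_zero_of_mem_WD hD hv, ?_⟩
  obtain ⟨y, hy⟩ := Set.Nonempty.intrinsicInterior (convex_WD D) ⟨0, zero_mem_WD D⟩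
  obtain ⟨ε, hε, hball⟩ := exists_forall_dist_lt_mem_of_mem_intrinsicInterior hy
  exact ⟨y, intrinsicInterior_subset hy, ε, hε, fun w hw =>
    hball w (mem_affineSpan_of_mem_span (zero_mem_WD D) (mem_span_WD hD hw))⟩
end
end

section
/- Let D ∈ A_d^n and v ∈ C^{n−d} × R^d, and define P_D(v) := {p ∈ (C^{n−d} × R^d) ∩ closure(D) : Re((z − p)•v) < 0 for all z ∈ D}. Then P_D(v) is a closed convex subset of the boundary ∂D, and if P_D(v) is non-empty then v ∈ W_D := {w ∈ C^n : sup_{z∈D} Re(z•w) < ∞}. -/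
open Complex Metric

noncomputable section

variable {m d : ℕ}

/-- The set `P_D(v) = {p ∈ (ℂ^{n-d} × ℝ^d) ∩ closure D : Re((z - p) • v) < 0 for all z ∈ D}`. -/
def PD (D : Set (En m d)) (v : En m d) : Set (En m d) :=
  {p | (∀ j, (p.2 j).im = 0) ∧ p ∈ closure D ∧ ∀ z ∈ D, (dotE (z - p) v).re < 0}

/-! With `ℓ p = Re (p • v)`, a real linear functional, `P_D(v)` is the intersection of the real
slice `ℂ^{n-d} × ℝ^d`, the closure of `D`, and `{p | ℓ < ℓ p on D}`. The last set is an
intersection of open half-spaces, hence convex; it is also closed, because a nonzero functional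
is an open map, so `ℓ` does not attain its supremum on the open set `D` and the strict
inequalities may be relaxed. Taking `z = p` shows `P_D(v) ∩ D = ∅`, and `ℓ p` bounds `ℓ` on `D`. -/

section OpenSupremum

variable {E : Type*} [TopologicalSpace E] [AddCommGroup E] [Module ℝ E] {D : Set E}

theorem convex_setOf_forall_lt (f : StrongDual ℝ E) : Convex ℝ {p | ∀ z ∈ D, f z < f p} := by
  simp only [Set.ofPred_forall]
  exact convex_iInter₂ fun z _ => convex_halfSpace_gt f.isLinear (f z)

variable [ContinuousAdd E] [ContinuousSMul ℝ E]

theorem Set.MapsTo.Iio_of_Iic_of_isOpen {f : StrongDual ℝ E} (hf : f ≠ 0) (hD : IsOpen D)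
    {c : ℝ} (h : Set.MapsTo f D (Set.Iic c)) : Set.MapsTo f D (Set.Iio c) := by
  have := interior_maximal h.image_subset (f.isOpenMap_of_ne_zero hf D hD)
  rwa [interior_Iic, ← Set.mapsTo_iff_image_subset] at this

theorem isClosed_setOf_forall_lt_of_isOpen (f : StrongDual ℝ E) (hD : IsOpen D) :
    IsClosed {p | ∀ z ∈ D, f z < f p} := by
  obtain rfl | hf := eq_or_ne f 0
  · simpa using isClosed_const
  have hrelax : {p | ∀ z ∈ D, f z < f p} = ⋂ z ∈ D, {p | f z ≤ f p} := by
    ext p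
    simp only [Set.mem_ofPred_eq, Set.mem_iInter]
    exact ⟨fun h z hz => (h z hz).le, fun h => Set.MapsTo.Iio_of_Iic_of_isOpen hf hD h⟩
  rw [hrelax]
  exact isClosed_biInter fun z _ => isClosed_le continuous_const f.continuous

end OpenSupremum

def reDotE (v : En m d) : StrongDual ℝ (En m d) :=
  LinearMap.toContinuousLinearMap
    { toFun := fun p => (dotE p v).re
      map_add' := fun p q => by
        simp only [dotE, Prod.fst_add, Prod.snd_add, Pi.add_apply, add_mul,
          Finset.sum_add_distrib, add_re]
        ring
      map_smul' := fun r p => by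
        simp only [dotE, Prod.smul_fst, Prod.smul_snd, Pi.smul_apply, Complex.real_smul,
          mul_assoc, ← Finset.mul_sum, ← mul_add, re_ofReal_mul, RingHom.id_apply,
          smul_eq_mul] }

@[simp] theorem reDotE_apply (v p : En m d) : reDotE v p = (dotE p v).re := rfl

theorem isClosed_setOf_snd_im_eq_zero : IsClosed {p : En m d | ∀ j, (p.2 j).im = 0} := by
  simp only [Set.ofPred_forall]
  exact isClosed_iInter fun j => isClosed_eq (by fun_prop) continuous_const

theorem convex_setOf_snd_im_eq_zero : Convex ℝ {p : En m d | ∀ j, (p.2 j).im = 0} := by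
  simp only [Set.ofPred_forall]
  exact convex_iInter fun j => convex_hyperplane ⟨fun p q => by simp, fun r p => by simp⟩ 0

theorem PD_eq_inter (D : Set (En m d)) (v : En m d) :
    PD D v = {p | ∀ j, (p.2 j).im = 0} ∩ closure D ∩
      {p | ∀ z ∈ D, reDotE v z < reDotE v p} := by
  ext p
  simp only [PD, ← reDotE_apply, map_sub, sub_neg, Set.mem_inter_iff, Set.mem_ofPred_eq,
    and_assoc]

theorem PD_closed_convex_subset_boundary_general {m d : ℕ} (D : Set (En m d)) (hD : InA D)
    (v : En m d) :
    IsClosed (PD D v) ∧ Convex ℝ (PD D v) ∧ PD D v ⊆ frontier D ∧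
      ((PD D v).Nonempty → v ∈ WD D) := by
  obtain ⟨hDo, -, hDc, -⟩ := hD
  rw [PD_eq_inter]
  refine ⟨(isClosed_setOf_snd_im_eq_zero.inter isClosed_closure).inter
      (isClosed_setOf_forall_lt_of_isOpen _ hDo),
    (convex_setOf_snd_im_eq_zero.inter hDc.closure).inter (convex_setOf_forall_lt _), ?_, ?_⟩
  · rintro p ⟨⟨-, hpD⟩, hp⟩
    rw [hDo.frontier_eq]
    exact ⟨hpD, fun hp' => lt_irrefl _ (hp p hp')⟩
  · rintro ⟨p, -, hp⟩
    exact ⟨reDotE v p, fun z hz => (hp z hz).le⟩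

/-- For `D ∈ 𝒜_d^n` and `v ∈ ℂ^{n-d} × ℝ^d`, the set `P_D(v)` is a closed
convex subset of `∂D`, and if it is non-empty then `v ∈ W_D`. -/
theorem PD_closed_convex_subset_boundary {m d : ℕ} (D : Set (En m d)) (hD : InA D)
    (v : En m d) (hv : ∀ j, (v.2 j).im = 0) :
    IsClosed (PD D v) ∧ Convex ℝ (PD D v) ∧ PD D v ⊆ frontier D ∧
      ((PD D v).Nonempty → v ∈ WD D) :=
  PD_closed_convex_subset_boundary_general D hD v
end
end
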